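/- arXiv:1509.00719 — 8 statements merged into one kernel-verified Lean document; each statement's English description precedes it below -/
import Mathlib

section
/- Let G and H be Polish groups, let ψ : G → H be a continuous injective group homomorphism, and let χ : H → H be a group automorphism of H that is also a homeomorphism, such that χ maps the image ψ(G) onto itself. Then there exists a group automorphism φ of G that is a homeomorphism of G and satisfies ψ(φ(g)) = χ(ψ(g)) for all g ∈ G. -/
open Filter Set Topology Pointwise

/-!
Since `χ` preserves `ψ(G)` and `ψ` is injective, `χ` pulls back to an abstract automorphism `φ`
of `G` with `ψ ∘ φ = χ ∘ ψ`. By Lusin–Souslin, a continuous injection out of a Polish space is a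
Borel embedding, so `φ` and `φ⁻¹` are Borel. A Borel homomorphism out of a Polish group is
continuous (Pettis): countably many translates `d • V` of a small closed neighbourhood `V` of `1`
cover the target, so by Baire one preimage `A = f⁻¹(d • V)` is non-meagre, and then `A⁻¹ * A`,
which `f` maps into `V⁻¹ * V`, is a neighbourhood of `1`.
-/

section Baire

variable {X : Type*} [TopologicalSpace X]

theorem isMeagre_congr_residualEq {s t : Set X} (h : s =ᵇ t) : IsMeagre s ↔ IsMeagre t :=
  eventually_congr h.compl.mem_iff

theorem nonempty_of_residualEq_isOpen [BaireSpace X] {s U : Set X} (h : s =ᵇ U)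
    (hU : IsOpen U) (hne : U.Nonempty) : s.Nonempty :=
  nonempty_of_not_isMeagre <| (isMeagre_congr_residualEq h).not.2 (not_isMeagre_of_isOpen hU hne)

end Baire

section Pettis

variable {G : Type*} [Group G] [TopologicalSpace G] [IsTopologicalGroup G] [BaireSpace G]

theorem BaireMeasurableSet.inv_mul_mem_nhds_one {A : Set G} (hA : BaireMeasurableSet A)
    (hA' : ¬IsMeagre A) : A⁻¹ * A ∈ 𝓝 1 := by
  obtain ⟨U, hUo, hAU⟩ := hA.residualEq_isOpen
  obtain ⟨u, hu⟩ : U.Nonempty :=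
    nonempty_of_not_isMeagre <| (isMeagre_congr_residualEq hAU).not.1 hA'
  refine mem_of_superset (hUo.mul_left.mem_nhds ⟨u⁻¹, inv_mem_inv.2 hu, u, hu, inv_mul_cancel u⟩) ?_
  rintro _ ⟨v, hv, w, hw, rfl⟩
  -- `A ∩ A (vw)⁻¹` agrees with `U ∩ U (vw)⁻¹` up to a meagre set, and the latter contains `v⁻¹`.
  have hmul : Tendsto (· * (v * w)) (residual G) (residual G) :=
    tendsto_residual_of_isOpenMap (continuous_mul_const _) (isOpenMap_mul_right _)
  obtain ⟨x, hxA, hxA'⟩ : (A ∩ (· * (v * w)) ⁻¹' A).Nonempty :=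
    nonempty_of_residualEq_isOpen (hAU.inter (hAU.comp_tendsto hmul))
      (hUo.inter (hUo.preimage (continuous_mul_const _)))
      ⟨v⁻¹, mem_inv.1 hv, show v⁻¹ * (v * w) ∈ U by rwa [inv_mul_cancel_left]⟩
  exact ⟨x⁻¹, inv_mem_inv.2 hxA, _, hxA', by group⟩

end Pettis

theorem MonoidHom.continuous_of_measurable {G G' : Type*} [Group G] [TopologicalSpace G]
    [IsTopologicalGroup G] [BaireSpace G] [MeasurableSpace G] [BorelSpace G]
    [Group G'] [TopologicalSpace G'] [IsTopologicalGroup G'] [LindelofSpace G']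
    [MeasurableSpace G'] [OpensMeasurableSpace G'] (f : G →* G') (hf : Measurable f) :
    Continuous f := by
  refine continuous_of_continuousAt_one f fun W hW ↦ ?_
  rw [map_one] at hW
  obtain ⟨V, hV, hVc, hVinv, hVW⟩ := exists_closed_nhds_one_inv_eq_mul_subset hW
  obtain ⟨D, hDc, hDV⟩ := countable_cover_nhds fun y : G' ↦ smul_mem_nhds_self.2 hV
  obtain ⟨d, -, hd⟩ : ∃ d ∈ D, ¬IsMeagre (f ⁻¹' (d • V)) := by
    refine exists_of_not_isMeagre_biUnion hDc ?_
    rw [← preimage_iUnion₂, hDV, preimage_univ]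
    exact not_isMeagre_of_isOpen isOpen_univ univ_nonempty
  refine mem_map.2 <| mem_of_superset
    ((hf (hVc.smul d).measurableSet).baireMeasurableSet.inv_mul_mem_nhds_one hd) ?_
  rintro _ ⟨a, ⟨v, hv, hva⟩, b, ⟨w, hw, hwb⟩, rfl⟩
  have hab : f (a * b) = v⁻¹ * w := by
    rw [map_mul, ← inv_inv a, map_inv, ← hva, ← hwb]
    simp [smul_eq_mul, mul_assoc]
  exact hVW ⟨v⁻¹, hVinv ▸ inv_mem_inv.2 hv, w, hw, hab.symm⟩

namespace MonoidHom

variable {G H : Type*} [Group G] [Group H]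

noncomputable def pullbackMulEquiv (ψ : G →* H) (hψ : Function.Injective ψ) (χ : H ≃* H)
    (hχ : χ '' Set.range ψ = Set.range ψ) : G ≃* G :=
  (ofInjective hψ).trans <| (χ.subgroupMap ψ.range).trans <|
    (MulEquiv.subgroupCongr (SetLike.coe_injective (by simpa using hχ))).trans
      (ofInjective hψ).symm

variable (ψ : G →* H) (hψ : Function.Injective ψ) (χ : H ≃* H)
  (hχ : χ '' Set.range ψ = Set.range ψ)

@[simp]
theorem apply_pullbackMulEquiv (g : G) : ψ (pullbackMulEquiv ψ hψ χ hχ g) = χ (ψ g) := by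
  simp [pullbackMulEquiv, ofInjective_apply]

@[simp]
theorem apply_pullbackMulEquiv_symm (g : G) :
    ψ ((pullbackMulEquiv ψ hψ χ hχ).symm g) = χ.symm (ψ g) := by
  rw [χ.eq_symm_apply, ← apply_pullbackMulEquiv ψ hψ χ hχ, MulEquiv.apply_symm_apply]

end MonoidHom

theorem stmt_0_general {G H : Type*}
    [Group G] [TopologicalSpace G] [IsTopologicalGroup G] [PolishSpace G]
    [Group H] [TopologicalSpace H] [PolishSpace H]
    (ψ : G →* H) (hψc : Continuous ψ) (hψi : Function.Injective ψ)
    (χ : H ≃* H) (hχc : Continuous χ) (hχsymm : Continuous χ.symm)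
    (hχim : χ '' (Set.range ψ) = Set.range ψ) :
    ∃ φ : G ≃* G, Continuous φ ∧ Continuous φ.symm ∧ ∀ g : G, ψ (φ g) = χ (ψ g) := by
  borelize G H
  have hψe : MeasurableEmbedding ψ := hψc.measurableEmbedding hψi
  set φ := ψ.pullbackMulEquiv hψi χ hχim
  refine ⟨φ, φ.toMonoidHom.continuous_of_measurable ?_,
    φ.symm.toMonoidHom.continuous_of_measurable ?_, ψ.apply_pullbackMulEquiv hψi χ hχim⟩
  · refine hψe.measurable_comp_iff.1 ?_
    simpa [Function.comp_def, φ] using (hχc.comp hψc).measurable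
  · refine hψe.measurable_comp_iff.1 ?_
    simpa [Function.comp_def, φ] using (hχsymm.comp hψc).measurable

/-- Let `G` and `H` be Polish groups, let `ψ : G → H` be a continuous injective
group homomorphism, and let `χ : H → H` be a group automorphism of `H` that is also a
homeomorphism, such that `χ` maps the image `ψ(G)` onto itself. Then there exists a group
automorphism `φ` of `G` that is a homeomorphism of `G` and satisfies `ψ(φ(g)) = χ(ψ(g))`
for all `g ∈ G`. -/
theorem stmt_0 {G H : Type*}
    [Group G] [TopologicalSpace G] [IsTopologicalGroup G] [PolishSpace G]
    [Group H] [TopologicalSpace H] [IsTopologicalGroup H] [PolishSpace H]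
    (ψ : G →* H) (hψc : Continuous ψ) (hψi : Function.Injective ψ)
    (χ : H ≃* H) (hχc : Continuous χ) (hχsymm : Continuous χ.symm)
    (hχim : χ '' (Set.range ψ) = Set.range ψ) :
    ∃ φ : G ≃* G, Continuous φ ∧ Continuous φ.symm ∧ ∀ g : G, ψ (φ g) = χ (ψ g) :=
  stmt_0_general ψ hψc hψi χ hχc hχsymm hχim
end

section
/- Let G and H be Polish groups with trivial center that are topologically perfect, and let ψ : G → H be a normal compression. Then G is topologically simple if and only if H is topologically simple. -/
/-!
A normal compression `ψ : G → H` lets `H` act on `G` by `h • g = ψ⁻¹ (h ψ(g) h⁻¹)`. Each such map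
is a Borel automorphism of the Polish group `G` and each orbit map `H → G` is Borel, so by
automatic continuity (a Baire category argument) the action is by homeomorphisms with
continuous orbit maps.

If `G` is topologically simple and `M` is a nontrivial closed normal subgroup of `H`, then since
`H` has trivial center, some element of the dense subgroup `ψ(G)` fails to commute with some
`m ∈ M`; their commutator is a nontrivial element of `M ∩ ψ(G)`, so `ψ⁻¹(M) = G` and `M = H`.
Conversely, if `H` is topologically simple and `N` is a nontrivial closed normal subgroup of `G`,
the closure of `ψ(N)` is normal in `H`, hence `ψ(N)` is dense. By continuity of the action,
every `h ∈ H` then acts trivially on `G ⧸ N`, as the elements of `ψ(N)` do; taking `h = ψ(a)`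
shows `[G, G] ≤ N`, and `N = G` because `G` is topologically perfect.
-/

/-- A topological group is topologically simple if it is nontrivial and its only closed
normal subgroups are the trivial subgroup and the whole group. -/
def IsTopologicallySimple (G : Type*) [Group G] [TopologicalSpace G] : Prop :=
  Nontrivial G ∧ ∀ N : Subgroup G, N.Normal → IsClosed (N : Set G) → N = ⊥ ∨ N = ⊤

open Topology Filter Set
open scoped commutatorElement

theorem Measurable.exists_mem_residual_continuousOn {X Y : Type*}
    [TopologicalSpace X] [MeasurableSpace X] [BorelSpace X]
    [TopologicalSpace Y] [SecondCountableTopology Y] [MeasurableSpace Y] [OpensMeasurableSpace Y]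
    {f : X → Y} (hf : Measurable f) : ∃ C ∈ residual X, ContinuousOn f C := by
  obtain ⟨b, hbc, -, hb⟩ := TopologicalSpace.exists_countable_basis Y
  have hU : ∀ V : b, ∃ U : Set X, IsOpen U ∧ {x | x ∈ f ⁻¹' V ↔ x ∈ U} ∈ residual X := by
    rintro ⟨V, hV⟩
    obtain ⟨U, hUo, hfU⟩ := (hf (hb.isOpen hV).measurableSet).residualEq_isOpen
    exact ⟨U, hUo, hfU.mono fun x hx => eq_iff_iff.mp hx⟩
  choose U hUo hUres using hU
  have : Countable b := hbc.to_subtype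
  refine ⟨⋂ V : b, {x | x ∈ f ⁻¹' V ↔ x ∈ U V}, countable_iInter_mem.2 hUres, fun x hx => ?_⟩
  rw [mem_iInter] at hx
  refine tendsto_nhds.2 fun O hO hfxO => ?_
  obtain ⟨V, hVb, hfxV, hVO⟩ := hb.exists_subset_of_mem_open hfxO hO
  refine mem_of_superset (inter_mem_nhdsWithin _ ((hUo ⟨V, hVb⟩).mem_nhds ((hx ⟨V, hVb⟩).1 hfxV)))
    fun y ⟨hyC, hyU⟩ => hVO ((mem_iInter.mp hyC ⟨V, hVb⟩).2 hyU)

theorem continuous_smul_const_of_measurable {X Y : Type*}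
    [Group X] [TopologicalSpace X] [IsTopologicalGroup X] [BaireSpace X] [FirstCountableTopology X]
    [MeasurableSpace X] [BorelSpace X]
    [TopologicalSpace Y] [SecondCountableTopology Y] [MeasurableSpace Y] [OpensMeasurableSpace Y]
    [MulAction X Y] [ContinuousConstSMul X Y] {y : Y} (hy : Measurable fun x : X => x • y) :
    Continuous fun x : X => x • y := by
  obtain ⟨C, hC, hCcont⟩ := hy.exists_mem_residual_continuousOn
  have hCmul : ∀ g : X, (· * g) ⁻¹' C ∈ residual X := fun g => by
    rwa [← (Homeomorph.mulRight g).residual_map_eq] at hC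
  refine continuous_iff_continuousAt.2 fun x₀ => tendsto_nhds_iff_seq_tendsto.2 fun u hu => ?_
  -- Translating by a generic `d` moves `x₀` and the whole sequence `u` into `C`.
  obtain ⟨d, hdx₀, hdu⟩ : ((· * x₀) ⁻¹' C ∩ ⋂ k, (· * u k) ⁻¹' C).Nonempty :=
    (dense_of_mem_residual
      (inter_mem (hCmul x₀) (countable_iInter_mem.2 fun k => hCmul (u k)))).nonempty
  have hdu_tendsto : Tendsto (fun k => d * u k) atTop (𝓝[C] (d * x₀)) :=
    tendsto_nhdsWithin_iff.2 ⟨hu.const_mul d, Eventually.of_forall (mem_iInter.mp hdu)⟩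
  have := ((continuous_const_smul d⁻¹).tendsto _).comp ((hCcont _ hdx₀).tendsto.comp hdu_tendsto)
  simpa only [Function.comp_def, smul_smul, inv_mul_cancel_left] using this

theorem MonoidHom.continuous_of_measurable_s5 {X Y : Type*}
    [Group X] [TopologicalSpace X] [IsTopologicalGroup X] [BaireSpace X] [FirstCountableTopology X]
    [MeasurableSpace X] [BorelSpace X]
    [Group Y] [TopologicalSpace Y] [IsTopologicalGroup Y] [SecondCountableTopology Y]
    [MeasurableSpace Y] [OpensMeasurableSpace Y]
    (θ : X →* Y) (hθ : Measurable θ) : Continuous θ := by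
  let _ : MulAction X Y := MulAction.compHom Y θ
  have _ : ContinuousConstSMul X Y := ⟨fun x => continuous_const_mul (θ x)⟩
  have hθ' : Continuous fun x => θ x * 1 :=
    continuous_smul_const_of_measurable (show Measurable fun x => θ x * 1 by simpa using hθ)
  simpa only [mul_one] using hθ'

section NormalCompression

variable {G H : Type*} [Group G] [Group H]

noncomputable def MonoidHom.rangeConj (ψ : G →* H) (hψ : Function.Injective ψ) [ψ.range.Normal] :
    H →* MulAut G :=
  (MulAut.congr (MonoidHom.ofInjective hψ).symm).toMonoidHom.comp MulAut.conjNormal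

theorem MonoidHom.apply_rangeConj_apply (ψ : G →* H) (hψ : Function.Injective ψ) [ψ.range.Normal]
    (h : H) (g : G) : ψ (ψ.rangeConj hψ h g) = h * ψ g * h⁻¹ := by
  simp [MonoidHom.rangeConj, MonoidHom.ofInjective_apply]

theorem MonoidHom.rangeConj_apply_self (ψ : G →* H) (hψ : Function.Injective ψ) [ψ.range.Normal]
    (a g : G) : ψ.rangeConj hψ (ψ a) g = a * g * a⁻¹ :=
  hψ (by rw [ψ.apply_rangeConj_apply, map_mul, map_mul, map_inv])

section Polish

variable [TopologicalSpace G] [IsTopologicalGroup G] [PolishSpace G]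
  [TopologicalSpace H] [IsTopologicalGroup H] [PolishSpace H]
  {ψ : G →* H} (hψc : Continuous ψ) (hψi : Function.Injective ψ) [ψ.range.Normal]
include hψc hψi

theorem MonoidHom.continuous_rangeConj_apply (h : H) : Continuous (ψ.rangeConj hψi h) := by
  borelize G H
  refine (ψ.rangeConj hψi h).toMonoidHom.continuous_of_measurable_s5 ?_
  rw [MulEquiv.coe_toMonoidHom, ← (hψc.measurableEmbedding hψi).measurable_comp_iff]
  simpa only [Function.comp_def, ψ.apply_rangeConj_apply] using
    (by fun_prop : Continuous fun g => h * ψ g * h⁻¹).measurable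

theorem MonoidHom.continuous_rangeConj_apply_const (g : G) :
    Continuous fun h => ψ.rangeConj hψi h g := by
  borelize G H
  let _ : MulAction H G := MulAction.compHom G (ψ.rangeConj hψi)
  have _ : ContinuousConstSMul H G := ⟨ψ.continuous_rangeConj_apply hψc hψi⟩
  refine continuous_smul_const_of_measurable (X := H) (y := g) ?_
  change Measurable fun h => ψ.rangeConj hψi h g
  rw [← (hψc.measurableEmbedding hψi).measurable_comp_iff]
  simpa only [Function.comp_def, ψ.apply_rangeConj_apply] using
    (by fun_prop : Continuous fun h : H => h * ψ g * h⁻¹).measurable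

theorem MonoidHom.commutator_le_of_dense_map {N : Subgroup G} [N.Normal]
    (hNc : IsClosed (N : Set G)) (hN : Dense (N.map ψ : Set H)) : commutator G ≤ N := by
  rw [commutator_def, Subgroup.commutator_le]
  intro a _ b _
  -- `ψ n` conjugates `b` into `b N` for `n ∈ N`; by continuity and density so does every `h ∈ H`.
  have hclosed : IsClosed {h : H | ψ.rangeConj hψi h b * b⁻¹ ∈ N} :=
    hNc.preimage ((ψ.continuous_rangeConj_apply_const hψc hψi b).mul continuous_const)
  have hsub : (N.map ψ : Set H) ⊆ {h : H | ψ.rangeConj hψi h b * b⁻¹ ∈ N} := by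
    rintro _ ⟨n, hn, rfl⟩
    simpa only [mem_ofPred_eq, ψ.rangeConj_apply_self, mul_assoc] using
      N.mul_mem hn (‹N.Normal›.conj_mem _ (N.inv_mem hn) b)
  have hall : univ ⊆ {h : H | ψ.rangeConj hψi h b * b⁻¹ ∈ N} :=
    hN.closure_eq ▸ closure_minimal hsub hclosed
  simpa only [mem_ofPred_eq, ψ.rangeConj_apply_self, commutatorElement_def] using
    hall (mem_univ (ψ a))

end Polish

section TopologicalGroup

variable [TopologicalSpace H]

theorem Subgroup.eq_top_of_isClosed_of_dense_subset {M : Subgroup H} (hM : IsClosed (M : Set H))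
    {s : Set H} (hs : Dense s) (hsM : s ⊆ M) : M = ⊤ :=
  eq_top_iff.2 fun x _ => hM.closure_subset_iff.2 hsM (hs x)

variable [IsTopologicalGroup H]

theorem Subgroup.normal_topologicalClosure_of_le_normalizer {K D : Subgroup H}
    (hD : Dense (D : Set H)) (hDK : D ≤ Subgroup.normalizer (K : Set H)) :
    K.topologicalClosure.Normal where
  conj_mem k hk x := by
    have hclosed : IsClosed {y : H | y * k * y⁻¹ ∈ K.topologicalClosure} :=
      K.isClosed_topologicalClosure.preimage (by fun_prop)
    have hDsub : (D : Set H) ⊆ {y : H | y * k * y⁻¹ ∈ K.topologicalClosure} := fun d hd =>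
      map_mem_closure (f := fun y => d * y * d⁻¹) (IsTopologicalGroup.continuous_conj d) hk
        fun m hm => (hDK hd m).1 hm
    exact hclosed.closure_subset_iff.2 hDsub (hD x)

theorem Subgroup.inf_ne_bot_of_dense [T2Space H] (hHz : Subgroup.center H = ⊥) {M D : Subgroup H}
    [M.Normal] [D.Normal] (hD : Dense (D : Set H)) (hM : M ≠ ⊥) : M ⊓ D ≠ ⊥ := by
  obtain ⟨⟨m, hmM⟩, hm1⟩ := Subgroup.ne_bot_iff_exists_ne_one.1 hM
  obtain ⟨d, hdD, hdm⟩ : ∃ d ∈ D, ¬Commute m d := by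
    by_contra! hcomm
    have hcentral : (D : Set H) ⊆ Set.centralizer {m} := fun d hd => by
      simpa [Set.mem_centralizer_iff] using (hcomm d hd).eq
    have hm : m ∈ Subgroup.center H := Subgroup.mem_center_iff.2 fun g =>
      (Set.isClosed_centralizer {m}).closure_subset_iff.2 hcentral (hD g) m rfl |>.symm
    exact hm1 (Subtype.ext (by simpa [hHz] using hm))
  intro hbot
  have hmd : ⁅m, d⁆ ∈ M ⊓ D := Subgroup.commutator_le_inf M D
    (Subgroup.commutator_mem_commutator hmM hdD)
  rw [hbot, Subgroup.mem_bot, commutatorElement_eq_one_iff_commute] at hmd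
  exact hdm hmd

end TopologicalGroup

structure IsNormalCompression [TopologicalSpace G] [TopologicalSpace H] (ψ : G →* H) : Prop where
  continuous : Continuous ψ
  injective : Function.Injective ψ
  denseRange : DenseRange ψ
  normal_range : ψ.range.Normal

namespace IsNormalCompression

variable [TopologicalSpace G] [TopologicalSpace H] [IsTopologicalGroup H] {ψ : G →* H}

theorem isTopologicallySimple_codomain [T2Space H] (hψ : IsNormalCompression ψ)
    (hHz : Subgroup.center H = ⊥) (hG : IsTopologicallySimple G) : IsTopologicallySimple H := by
  have := hG.1
  refine ⟨hψ.injective.nontrivial, fun M hMn hMc => or_iff_not_imp_left.2 fun hM => ?_⟩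
  have := hψ.normal_range
  have := hMn
  have hcomap : M.comap ψ ≠ ⊥ := fun hbot => by
    refine Subgroup.inf_ne_bot_of_dense (D := ψ.range) hHz hψ.denseRange hM ?_
    rw [inf_comm, ← Subgroup.map_comap_eq, hbot, Subgroup.map_bot]
  have htop := (hG.2 _ (hMn.comap ψ) (hMc.preimage hψ.continuous)).resolve_left hcomap
  exact M.eq_top_of_isClosed_of_dense_subset hMc hψ.denseRange
    (range_subset_iff.2 fun g => (Subgroup.eq_top_iff' _).1 htop g)

theorem isTopologicallySimple_domain [IsTopologicalGroup G] [PolishSpace G] [PolishSpace H]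
    (hψ : IsNormalCompression ψ) (hGp : (commutator G).topologicalClosure = ⊤)
    (hH : IsTopologicallySimple H) : IsTopologicallySimple G := by
  have := hH.1
  have := hψ.normal_range
  refine ⟨?_, fun N hNn hNc => or_iff_not_imp_left.2 fun hN => ?_⟩
  · by_contra hG
    rw [not_nontrivial_iff_subsingleton] at hG
    refine bot_ne_top ((⊥ : Subgroup H).eq_top_of_isClosed_of_dense_subset isClosed_singleton
      hψ.denseRange (range_subset_iff.2 fun g => ?_))
    simp [Subsingleton.elim g 1]
  have := hNn
  have hKn : (N.map ψ).topologicalClosure.Normal := by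
    refine Subgroup.normal_topologicalClosure_of_le_normalizer (D := ψ.range) hψ.denseRange ?_
    rw [MonoidHom.range_eq_map, ← Subgroup.normalizer_eq_top (H := N)]
    exact Subgroup.le_normalizer_map ψ
  have hK := (hH.2 _ hKn (N.map ψ).isClosed_topologicalClosure).resolve_left fun hbot =>
    hN ((Subgroup.map_eq_bot_iff_of_injective _ hψ.injective).1
      (le_bot_iff.1 (hbot ▸ (N.map ψ).le_topologicalClosure)))
  have hdense : Dense (N.map ψ : Set H) := by
    rw [dense_iff_closure_eq, ← Subgroup.topologicalClosure_coe, hK, Subgroup.coe_top]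
  have hcomm := ψ.commutator_le_of_dense_map hψ.continuous hψ.injective hNc hdense
  exact top_le_iff.1 (hGp ▸ Subgroup.topologicalClosure_minimal _ hcomm hNc)

end IsNormalCompression

end NormalCompression

theorem stmt_5_general {G H : Type*}
    [Group G] [TopologicalSpace G] [IsTopologicalGroup G] [PolishSpace G]
    [Group H] [TopologicalSpace H] [IsTopologicalGroup H] [PolishSpace H]
    (hHz : Subgroup.center H = ⊥)
    (hGp : (commutator G).topologicalClosure = ⊤)
    (ψ : G →* H) (hψc : Continuous ψ) (hψi : Function.Injective ψ)
    (hdense : DenseRange (⇑ψ)) (hnorm : ψ.range.Normal) :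
    IsTopologicallySimple G ↔ IsTopologicallySimple H := by
  have hψ : IsNormalCompression ψ := ⟨hψc, hψi, hdense, hnorm⟩
  exact ⟨hψ.isTopologicallySimple_codomain hHz, hψ.isTopologicallySimple_domain hGp⟩

/-- Let `G` and `H` be Polish groups with trivial center that are topologically
perfect, and let `ψ : G → H` be a normal compression. Then `G` is topologically simple if
and only if `H` is topologically simple. -/
theorem stmt_5 {G H : Type*}
    [Group G] [TopologicalSpace G] [IsTopologicalGroup G] [PolishSpace G]
    [Group H] [TopologicalSpace H] [IsTopologicalGroup H] [PolishSpace H]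
    (hGz : Subgroup.center G = ⊥) (hHz : Subgroup.center H = ⊥)
    (hGp : (commutator G).topologicalClosure = ⊤)
    (hHp : (commutator H).topologicalClosure = ⊤)
    (ψ : G →* H) (hψc : Continuous ψ) (hψi : Function.Injective ψ)
    (hdense : DenseRange (⇑ψ)) (hnorm : ψ.range.Normal) :
    IsTopologicallySimple G ↔ IsTopologicallySimple H :=
  stmt_5_general hHz hGp ψ hψc hψi hdense hnorm
end

section
/- Let G and H be non-abelian Polish groups, let ψ : G → H be a normal compression, and let A be a group acting on G and on H by group automorphisms that are homeomorphisms, such that ψ is A-equivariant (ψ(a•g) = a•ψ(g) for all a ∈ A, g ∈ G). If G is A-simple, then every closed normal A-invariant subgroup L of H with L ≠ H is contained in the center of H; in particular H/Z(H) has no proper nontrivial closed normal A-invariant subgroup. -/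
/-!
The preimage of `L` under `ψ` is a closed normal `A`-invariant subgroup of `G`. It cannot be all
of `G`, since then the closed subgroup `L` would contain the dense subgroup `ψ(G)`; so by
`A`-simplicity it is trivial, i.e. `L ∩ ψ(G) = 1`. Both `L` and `ψ(G)` are normal in `H`, so
`[L, ψ(G)] ≤ L ∩ ψ(G) = 1` and `L` centralizes `ψ(G)`. The centralizer of `L` is closed and
contains the dense set `ψ(G)`, hence is all of `H`.
-/

namespace Subgroup

theorem eq_top_of_range_le_of_denseRange {G H : Type*} [Group G] [Group H] [TopologicalSpace H]
    {ψ : G →* H} (hψ : DenseRange ψ) {L : Subgroup H} (hL : IsClosed (L : Set H))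
    (hle : ψ.range ≤ L) : L = ⊤ :=
  eq_top_iff.2 fun x _ => hψ.induction_on (p := (· ∈ L)) x hL fun g => hle ⟨g, rfl⟩

theorem le_centralizer_of_inf_eq_bot {H : Type*} [Group H] {L N : Subgroup H} [L.Normal]
    [N.Normal] (h : L ⊓ N = ⊥) : L ≤ centralizer N :=
  commutator_eq_bot_iff_le_centralizer.1 (eq_bot_iff.2 (h ▸ commutator_le_inf L N))

theorem le_center_of_le_centralizer_range {G H : Type*} [Group G] [Group H] [TopologicalSpace H]
    [ContinuousMul H] [T2Space H] {ψ : G →* H} (hψ : DenseRange ψ) {L : Subgroup H}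
    (h : L ≤ centralizer ψ.range) : L ≤ center H := by
  have hcentralizer : centralizer (L : Set H) = ⊤ :=
    eq_top_of_range_le_of_denseRange hψ (Set.isClosed_centralizer _) (le_centralizer_iff.1 h)
  rw [← centralizer_univ, ← coe_top, le_centralizer_iff, hcentralizer]

end Subgroup

theorem stmt_6_general {G H A : Type*}
    [Group G] [TopologicalSpace G]
    [Group H] [TopologicalSpace H] [IsTopologicalGroup H] [PolishSpace H]
    [Group A] [MulDistribMulAction A G] [MulDistribMulAction A H]
    (ψ : G →* H) (hψc : Continuous ψ)
    (hdense : DenseRange (⇑ψ)) (hnorm : ψ.range.Normal)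
    (hequiv : ∀ (a : A) (g : G), ψ (a • g) = a • ψ g)
    (hGsimple : ∀ N : Subgroup G, N.Normal → IsClosed (N : Set G) →
      (∀ (a : A), ∀ n ∈ N, a • n ∈ N) → N = ⊥ ∨ N = ⊤) :
    ∀ L : Subgroup H, L.Normal → IsClosed (L : Set H) →
      (∀ (a : A), ∀ l ∈ L, a • l ∈ L) → L ≠ ⊤ → L ≤ Subgroup.center H := by
  intro L hLnorm hLclosed hLinv hLne
  have hcomap : L.comap ψ = ⊥ := by
    refine (hGsimple _ (hLnorm.comap ψ) (hLclosed.preimage hψc) fun a g hg => ?_).resolve_right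
      fun htop => hLne (Subgroup.eq_top_of_range_le_of_denseRange hdense hLclosed ?_)
    · simpa only [Subgroup.mem_comap, hequiv] using hLinv a _ hg
    · rintro _ ⟨g, rfl⟩
      exact Subgroup.mem_comap.1 (htop ▸ Subgroup.mem_top g)
  have hinf : L ⊓ ψ.range = ⊥ := by
    rw [inf_comm, ← Subgroup.map_comap_eq, hcomap, Subgroup.map_bot]
  exact Subgroup.le_center_of_le_centralizer_range hdense
    (Subgroup.le_centralizer_of_inf_eq_bot hinf)

/-- Let `G` and `H` be non-abelian Polish groups, let `ψ : G → H` be a normal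
compression, and let `A` be a group acting on `G` and on `H` by group automorphisms that are
homeomorphisms, such that `ψ` is `A`-equivariant. If `G` is `A`-simple, then every closed
normal `A`-invariant subgroup `L` of `H` with `L ≠ H` is contained in the center of `H`. -/
theorem stmt_6 {G H A : Type*}
    [Group G] [TopologicalSpace G] [IsTopologicalGroup G] [PolishSpace G]
    [Group H] [TopologicalSpace H] [IsTopologicalGroup H] [PolishSpace H]
    [Group A] [MulDistribMulAction A G] [MulDistribMulAction A H]
    (hGna : ∃ a b : G, a * b ≠ b * a) (hHna : ∃ a b : H, a * b ≠ b * a)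
    (hAG : ∀ a : A, Continuous fun g : G => a • g)
    (hAH : ∀ a : A, Continuous fun h : H => a • h)
    (ψ : G →* H) (hψc : Continuous ψ) (hψi : Function.Injective ψ)
    (hdense : DenseRange (⇑ψ)) (hnorm : ψ.range.Normal)
    (hequiv : ∀ (a : A) (g : G), ψ (a • g) = a • ψ g)
    (hGsimple : ∀ N : Subgroup G, N.Normal → IsClosed (N : Set G) →
      (∀ (a : A), ∀ n ∈ N, a • n ∈ N) → N = ⊥ ∨ N = ⊤) :
    ∀ L : Subgroup H, L.Normal → IsClosed (L : Set H) →
      (∀ (a : A), ∀ l ∈ L, a • l ∈ L) → L ≠ ⊤ → L ≤ Subgroup.center H :=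
  stmt_6_general ψ hψc hdense hnorm hequiv hGsimple
end

section
/- Let K be a topological group and let G and H be subgroups of K. If the underlying set of G is connected, then the underlying set of the commutator subgroup [G,H] (the subgroup generated by all commutators [g,h] with g ∈ G, h ∈ H) is connected. -/
/-!
The commutators `⁅g, h⁆` with `h ∈ H` fixed form the image of the connected set `G` under a
continuous map sending `1` to `1`, so the generating set of `⁅G, H⁆` is a union of connected sets
through `1` and hence connected. A subgroup generated by a connected set `S ∋ 1` is connected:
inside it, `S` lies in the identity component, which is a subgroup and therefore everything.
-/

open scoped commutatorElement

section

variable {K : Type*} [Group K] [TopologicalSpace K] [IsTopologicalGroup K]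

theorem Subgroup.isConnected_closure_of_isPreconnected {S : Set K} (hS : IsPreconnected S)
    (h1 : (1 : K) ∈ S) : IsConnected (Subgroup.closure S : Set K) := by
  rw [isConnected_iff_connectedSpace]
  set L := Subgroup.closure S
  have hS' : IsPreconnected (((↑) : L → K) ⁻¹' S) := by
    have hSL : S ⊆ Set.range ((↑) : L → K) := by
      rw [Subtype.range_coe_subtype]
      exact Subgroup.subset_closure
    exact Topology.IsInducing.subtypeVal.isPreconnected_image.1 <|
      (Set.image_preimage_eq_of_subset hSL).symm ▸ hS
  have hL : Subgroup.closure (((↑) : L → K) ⁻¹' S) ≤ Subgroup.connectedComponentOfOne L :=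
    Subgroup.closure_le _ |>.2 <| hS'.subset_connectedComponent (x := (1 : L)) h1
  rw [Subgroup.closure_closure_coe_preimage] at hL
  exact connectedSpace_iff_connectedComponent.2
    ⟨1, Set.eq_univ_of_forall fun x => hL (Subgroup.mem_top x)⟩

theorem isPreconnected_setOf_commutatorElement {A B : Set K} (hA : IsPreconnected A)
    (h1 : (1 : K) ∈ A) : IsPreconnected {g | ∃ a ∈ A, ∃ b ∈ B, ⁅a, b⁆ = g} := by
  refine isPreconnected_of_forall 1 ?_
  rintro _ ⟨a, ha, b, hb, rfl⟩
  refine ⟨(⁅·, b⁆) '' A, ?_, ⟨1, h1, commutatorElement_one_left b⟩, ⟨a, ha, rfl⟩, ?_⟩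
  · rintro _ ⟨a', ha', rfl⟩
    exact ⟨a', ha', b, hb, rfl⟩
  · exact hA.image _ (by simp only [commutatorElement_def]; fun_prop)

end

/-- Let `K` be a topological group and let `G` and `H` be subgroups of `K`.
If the underlying set of `G` is connected, then the underlying set of the commutator
subgroup `[G,H]` is connected. -/
theorem stmt_8 {K : Type*} [Group K] [TopologicalSpace K] [IsTopologicalGroup K]
    (G H : Subgroup K) (hG : IsConnected (G : Set K)) :
    IsConnected ((⁅G, H⁆ : Subgroup K) : Set K) := by
  rw [Subgroup.commutator_def]
  exact Subgroup.isConnected_closure_of_isPreconnected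
    (isPreconnected_setOf_commutatorElement hG.isPreconnected G.one_mem)
    ⟨1, G.one_mem, 1, H.one_mem, commutatorElement_one_left 1⟩
end

section
/- Let G be a second countable topological group and let S be a quasi-direct factorization of G. Then S is countable. -/
/-!
Each nontrivial `N ∈ S` meets the complement of the closed subgroup `G_{S \ {N}}` by
independence, and it is the only member of `S` doing so. Basic open sets inside these
complements, around points of the respective `N`, therefore separate the members of `S`,
giving an injection of `S \ {⊥}` into a countable basis.
-/

/-- For a set `J` of closed normal subgroups of `G`, `GJoin J` is the topological closure
of the subgroup generated by the union of the members of `J`. -/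
def GJoin {G : Type*} [Group G] [TopologicalSpace G] [IsTopologicalGroup G]
    (J : Set (Subgroup G)) : Subgroup G :=
  (sSup J).topologicalClosure

/-- `S` is a quasi-direct factorization of `G`: `G_S = G` and `S` has the independence
property. -/
def IsQuasiDirectFactorization {G : Type*} [Group G] [TopologicalSpace G] [IsTopologicalGroup G]
    (S : Set (Subgroup G)) : Prop :=
  GJoin S = ⊤ ∧
    ∀ X : Set (Set (Subgroup G)), (∀ A ∈ X, A ⊆ S) → ⋂₀ X = ∅ →
      ∀ g : G, (∀ A ∈ X, g ∈ GJoin A) → g = 1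

open Set TopologicalSpace

theorem Set.countable_of_not_subset_isClosed {ι X : Type*} [TopologicalSpace X]
    [SecondCountableTopology X] {s : Set ι} {F C : ι → Set X}
    (hC : ∀ i ∈ s, IsClosed (C i)) (hF : ∀ i ∈ s, ¬ F i ⊆ C i)
    (hFC : ∀ i ∈ s, ∀ j ∈ s, j ≠ i → F j ⊆ C i) : s.Countable := by
  obtain ⟨b, hbc, -, hb⟩ := exists_countable_basis X
  have separating : ∀ i ∈ s, ∃ t ∈ b, (t ∩ F i).Nonempty ∧ t ⊆ (C i)ᶜ := by
    intro i hi
    obtain ⟨x, hxF, hxC⟩ := not_subset.1 (hF i hi)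
    obtain ⟨t, htb, hxt, htC⟩ := hb.exists_subset_of_mem_open hxC (hC i hi).isOpen_compl
    exact ⟨t, htb, ⟨x, hxt, hxF⟩, htC⟩
  choose! t htb hFt htC using separating
  refine MapsTo.countable_of_injOn htb (fun i hi j hj hij => ?_) hbc
  by_contra hne
  obtain ⟨x, hxt, hxF⟩ := hFt j hj
  exact htC i hi (hij ▸ hxt) (hFC i hi j hj (Ne.symm hne) hxF)

section

variable {G : Type*} [Group G] [TopologicalSpace G] [IsTopologicalGroup G]

def HasIndependenceProperty (S : Set (Subgroup G)) : Prop :=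
  ∀ X : Set (Set (Subgroup G)), (∀ A ∈ X, A ⊆ S) → ⋂₀ X = ∅ →
    ∀ g : G, (∀ A ∈ X, g ∈ GJoin A) → g = 1

theorem IsQuasiDirectFactorization.hasIndependenceProperty {S : Set (Subgroup G)}
    (hS : IsQuasiDirectFactorization S) : HasIndependenceProperty S :=
  hS.2

theorem le_gJoin_of_mem {J : Set (Subgroup G)} {N : Subgroup G} (hN : N ∈ J) :
    N ≤ GJoin J :=
  (le_sSup hN).trans (Subgroup.le_topologicalClosure _)

theorem HasIndependenceProperty.eq_one_of_mem_gJoin_diff_singleton {S : Set (Subgroup G)}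
    (hS : HasIndependenceProperty S) {N : Subgroup G} (hN : N ∈ S) {g : G} (hg : g ∈ N)
    (hg' : g ∈ GJoin (S \ {N})) : g = 1 := by
  refine hS {{N}, S \ {N}} ?_ (by simp) g ?_
  · rintro A (rfl | rfl)
    · exact singleton_subset_iff.2 hN
    · exact sdiff_subset
  · rintro A (rfl | rfl)
    · exact le_gJoin_of_mem (mem_singleton N) hg
    · exact hg'

theorem HasIndependenceProperty.countable [SecondCountableTopology G] {S : Set (Subgroup G)}
    (hS : HasIndependenceProperty S) : S.Countable := by
  refine Countable.of_sdiff ?_ (countable_singleton ⊥)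
  refine countable_of_not_subset_isClosed (F := fun N => (N : Set G))
    (C := fun N => GJoin (S \ {N})) (fun N _ => Subgroup.isClosed_topologicalClosure _) ?_ ?_
  · rintro N ⟨hN, hN_ne⟩ hsub
    obtain ⟨g, hg, hg_ne⟩ := (Subgroup.bot_or_exists_ne_one N).resolve_left hN_ne
    exact hg_ne (hS.eq_one_of_mem_gJoin_diff_singleton hN hg (hsub hg))
  · rintro N - M ⟨hM, -⟩ hMN
    exact le_gJoin_of_mem ⟨hM, hMN⟩

end

theorem stmt_13_general {G : Type*} [Group G] [TopologicalSpace G] [IsTopologicalGroup G]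
    [SecondCountableTopology G]
    (S : Set (Subgroup G))
    (hS : IsQuasiDirectFactorization S) :
    S.Countable :=
  hS.hasIndependenceProperty.countable

/-- Let `G` be a second countable topological group and let `S` be a
quasi-direct factorization of `G`. Then `S` is countable. -/
theorem stmt_13 {G : Type*} [Group G] [TopologicalSpace G] [IsTopologicalGroup G]
    [SecondCountableTopology G]
    (S : Set (Subgroup G))
    (hSclosed : ∀ N ∈ S, IsClosed (N : Set G)) (hSnormal : ∀ N ∈ S, N.Normal)
    (hS : IsQuasiDirectFactorization S) :
    S.Countable :=
  stmt_13_general S hS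
end

section
/- If G is a Polish group, then the set of components of G is countable. -/
/-!
Distinct components commute elementwise. The engine is that a component `M` is topologically
perfect: by (b) and (c) the closure of `⁅M, M⁆` is all of `M`, so an element commuting with every
commutator of `M` commutes with `M`. A direct computation shows that `g` commutes with every
commutator of `M` as soon as the elements `⁅x, g⁆`, `x ∈ M`, commute with `M` and with each other,
and condition (c), applied to `M ⊓ M'`, `M ⊓ N'` or `M' ⊓ N` (with `N`, `N'` the closed normal
closures of `M`, `M'`), supplies exactly that.

For each component `M` pick `a, b, c ∈ M` with `⁅a, b⁆` not commuting with `c`. The open set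
`{x | ¬Commute ⁅x, b⁆ c}` contains `a` but no element of any other component, so a basic open set
around `a` inside it determines `M`, and a countable basis leaves room for only countably many
components.
-/

/-- A component of a topological group `G` is a closed subgroup `M` such that, writing `N`
for the topological closure of the normal closure of `M` in `G`:
(a) `M` is a normal subgroup of `N`;
(b) there exist `a, b ∈ M` whose commutator does not lie in the center of `M`;
(c) every proper closed normal subgroup `K` of `M` commutes elementwise with `N`. -/
def IsComponent {G : Type*} [Group G] [TopologicalSpace G] [IsTopologicalGroup G]
    (M : Subgroup G) : Prop :=
  IsClosed (M : Set G) ∧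
  (∀ n ∈ (Subgroup.normalClosure (M : Set G)).topologicalClosure,
      ∀ m ∈ M, n * m * n⁻¹ ∈ M) ∧
  (∃ a ∈ M, ∃ b ∈ M, ∃ c ∈ M,
      (a * b * a⁻¹ * b⁻¹) * c ≠ c * (a * b * a⁻¹ * b⁻¹)) ∧
  (∀ K : Subgroup G, K ≤ M → K ≠ M → IsClosed (K : Set G) →
      (∀ m ∈ M, ∀ k ∈ K, m * k * m⁻¹ ∈ K) →
      ∀ k ∈ K, ∀ n ∈ (Subgroup.normalClosure (M : Set G)).topologicalClosure,
        k * n = n * k)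

open scoped commutatorElement
open Subgroup

theorem commute_commutatorElement_of_commute {G : Type*} [Group G] {a b g : G}
    (hua : Commute ⁅a, g⁆ a) (hub : Commute ⁅a, g⁆ b) (hva : Commute ⁅b, g⁆ a)
    (hvb : Commute ⁅b, g⁆ b) (huv : Commute ⁅a, g⁆ ⁅b, g⁆) : Commute ⁅a, b⁆ g := by
  have hai : ⁅a⁻¹, g⁆ = ⁅a, g⁆⁻¹ := by
    rw [commutatorElement_inv_left, ← commutatorElement_inv, hua.inv_left.symm.inv_mul_cancel]
  have hbi : ⁅b⁻¹, g⁆ = ⁅b, g⁆⁻¹ := by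
    rw [commutatorElement_inv_left, ← commutatorElement_inv, hvb.inv_left.symm.inv_mul_cancel]
  rw [← commutatorElement_eq_one_iff_commute, commutatorElement_def a b,
    commutatorElement_mul_left_eq_conj_mul, commutatorElement_mul_left_eq_conj_mul,
    commutatorElement_mul_left_eq_conj_mul, hai, hbi, hva.symm.mul_inv_cancel,
    (hua.mul_right hub).symm.inv_right.mul_inv_cancel,
    ((hva.mul_right hvb).mul_right hva.inv_right).symm.inv_right.mul_inv_cancel, ← huv.eq]
  group

namespace Subgroup

variable {G : Type*} [Group G]

theorem commutatorElement_mem_of_le_normalizer_left {H K : Subgroup G}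
    (h : H ≤ normalizer (K : Set G)) {a b : G} (ha : a ∈ H) (hb : b ∈ K) : ⁅a, b⁆ ∈ K :=
  le_normalizer_iff_commutator_le_right.mp h (commutator_mem_commutator ha hb)

theorem commutatorElement_mem_of_le_normalizer_right {H K : Subgroup G}
    (h : H ≤ normalizer (K : Set G)) {a b : G} (ha : a ∈ K) (hb : b ∈ H) : ⁅a, b⁆ ∈ K :=
  le_normalizer_iff_commutator_le_left.mp h (commutator_mem_commutator ha hb)

end Subgroup

theorem countable_of_isOpen_mem_iff {X ι : Type*} [TopologicalSpace X]
    [SecondCountableTopology X] (x : ι → X) (U : ι → Set X) (hU : ∀ i, IsOpen (U i))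
    (hxU : ∀ i j, x j ∈ U i ↔ j = i) : Countable ι := by
  obtain ⟨B, hBc, -, hB⟩ := TopologicalSpace.exists_countable_basis X
  have hbasis : ∀ i, ∃ V ∈ B, x i ∈ V ∧ V ⊆ U i := fun i =>
    hB.exists_subset_of_mem_open ((hxU i i).mpr rfl) (hU i)
  choose V hVB hxV hVU using hbasis
  have : Countable B := hBc.to_subtype
  refine Function.Injective.countable (f := fun i => (⟨V i, hVB i⟩ : B)) fun i j hij => ?_
  have hV : V i = V j := congrArg Subtype.val hij
  have hj : x j ∈ V i := hV ▸ hxV j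
  exact ((hxU i j).mp (hVU i hj)).symm

namespace Subgroup

variable {G : Type*} [Group G] [TopologicalSpace G] [IsTopologicalGroup G]

theorem le_normalizer_topologicalClosure {H K : Subgroup G} (h : H ≤ normalizer (K : Set G)) :
    H ≤ normalizer (K.topologicalClosure : Set G) := by
  refine le_normalizer_iff.mpr fun m hm k hk => ?_
  have hmaps : Set.MapsTo (fun x => m * x * m⁻¹) (K : Set G) K :=
    fun x hx => le_normalizer_iff.mp h m hm x hx
  exact hmaps.closure (by fun_prop) hk

def closedNormalClosure (M : Subgroup G) : Subgroup G :=
  (normalClosure (M : Set G)).topologicalClosure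

theorem le_closedNormalClosure (M : Subgroup G) : M ≤ M.closedNormalClosure :=
  le_normalClosure.trans (le_topologicalClosure _)

instance (M : Subgroup G) : M.closedNormalClosure.Normal :=
  is_normal_topologicalClosure _

theorem isClosed_closedNormalClosure (M : Subgroup G) :
    IsClosed (M.closedNormalClosure : Set G) :=
  isClosed_topologicalClosure _

end Subgroup

namespace IsComponent

variable {G : Type*} [Group G] [TopologicalSpace G] [IsTopologicalGroup G] {M M' : Subgroup G}

theorem isClosed (hM : IsComponent M) : IsClosed (M : Set G) := hM.1

theorem closedNormalClosure_le_normalizer (hM : IsComponent M) :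
    M.closedNormalClosure ≤ normalizer (M : Set G) :=
  le_normalizer_iff.mpr hM.2.1

theorem exists_not_commute (hM : IsComponent M) :
    ∃ a ∈ M, ∃ b ∈ M, ∃ c ∈ M, ¬Commute ⁅a, b⁆ c :=
  hM.2.2.1

theorem commute_of_mem_inf (hM : IsComponent M) {K : Subgroup G} (hK : IsClosed (K : Set G))
    (hMK : M ≤ normalizer (K : Set G)) (hMK' : ¬M ≤ K) {k n : G} (hk : k ∈ M ⊓ K)
    (hn : n ∈ M.closedNormalClosure) : Commute k n :=
  hM.2.2.2 (M ⊓ K) inf_le_left (fun h => hMK' (h ▸ inf_le_right)) (hM.isClosed.inter hK)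
    (le_normalizer_iff.mp ((le_inf le_normalizer hMK).trans inf_normalizer_le_normalizer_inf))
    k hk n hn

theorem eq_of_le (hM : IsComponent M) (hM' : IsComponent M') (hle : M ≤ M')
    (hM'M : M' ≤ M.closedNormalClosure) : M = M' := by
  by_contra hne
  obtain ⟨a, ha, b, hb, c, -, hnc⟩ := hM.exists_not_commute
  have hab : Commute a b := hM'.commute_of_mem_inf hM.isClosed
    (hM'M.trans hM.closedNormalClosure_le_normalizer)
    (fun h => hne (le_antisymm hle h)) ⟨hle ha, ha⟩
    (M'.le_closedNormalClosure (hle hb))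
  exact hnc (by rw [commutatorElement_eq_one_iff_commute.mpr hab]; exact Commute.one_left c)

variable [T2Space G]

theorem commute_of_forall_commute_commutatorElement (hM : IsComponent M) {g : G}
    (hg : ∀ a ∈ M, ∀ b ∈ M, Commute g ⁅a, b⁆) {m : G} (hm : m ∈ M) : Commute g m := by
  set S := (⁅M, M⁆ : Subgroup G).topologicalClosure
  have hMS : M ≤ S := by
    by_contra hMS
    obtain ⟨a, ha, b, hb, c, hc, hnc⟩ := hM.exists_not_commute
    exact hnc (hM.commute_of_mem_inf (isClosed_topologicalClosure _)
      (le_normalizer_topologicalClosure (normalizer_commutator_ge_left M M)) hMS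
      ⟨M.commutator_le_self (commutator_mem_commutator ha hb),
        le_topologicalClosure _ (commutator_mem_commutator ha hb)⟩
      (M.le_closedNormalClosure hc))
  have hSg : S ≤ centralizer {g} := topologicalClosure_minimal _
    (commutator_le.mpr fun a ha b hb => mem_centralizer_singleton_iff.mpr (hg a ha b hb).symm)
    (Set.isClosed_centralizer _)
  exact (mem_centralizer_singleton_iff.mp (hSg (hMS hm))).symm

theorem commute_of_forall_commutatorElement_commute (hM : IsComponent M) {g : G}
    (h₁ : ∀ x ∈ M, ∀ y ∈ M, Commute ⁅x, g⁆ y) (h₂ : ∀ x ∈ M, ∀ y ∈ M, Commute ⁅x, g⁆ ⁅y, g⁆)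
    {m : G} (hm : m ∈ M) : Commute g m :=
  hM.commute_of_forall_commute_commutatorElement (fun a ha b hb =>
    (commute_commutatorElement_of_commute (h₁ a ha a ha) (h₁ a ha b hb) (h₁ b hb a ha)
      (h₁ b hb b hb) (h₂ a ha b hb)).symm) hm

theorem commute_commutatorElement (hM : IsComponent M) (hM' : IsComponent M') (hne : M ≠ M')
    {m m' n : G} (hm : m ∈ M) (hm' : m' ∈ M') (hn : n ∈ M) : Commute ⁅m, m'⁆ n := by
  have hN : ⁅m, m'⁆ ∈ M.closedNormalClosure := commutatorElement_mem_of_le_normalizer_right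
    le_normalizer_of_normal (M.le_closedNormalClosure hm) (mem_top m')
  by_cases hMN' : M ≤ M'.closedNormalClosure
  · have hM'mem : ⁅m, m'⁆ ∈ M' := commutatorElement_mem_of_le_normalizer_left
      (hMN'.trans hM'.closedNormalClosure_le_normalizer) hm hm'
    by_cases hM'N : M' ≤ M.closedNormalClosure
    · have hMmem : ⁅m, m'⁆ ∈ M := commutatorElement_mem_of_le_normalizer_right
        (hM'N.trans hM.closedNormalClosure_le_normalizer) hm hm'
      exact hM.commute_of_mem_inf hM'.isClosed (hMN'.trans hM'.closedNormalClosure_le_normalizer)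
        (fun h => hne (hM.eq_of_le hM' h hM'N)) ⟨hMmem, hM'mem⟩ (M.le_closedNormalClosure hn)
    · exact hM'.commute_of_mem_inf M.isClosed_closedNormalClosure le_normalizer_of_normal hM'N
        ⟨hM'mem, hN⟩ (hMN' hn)
  · set u := ⁅m, m'⁆
    have hN' : u ∈ M'.closedNormalClosure := commutatorElement_mem_of_le_normalizer_left
      le_normalizer_of_normal (mem_top m) (M'.le_closedNormalClosure hm')
    have hxu : ∀ x ∈ M, ⁅x, u⁆ ∈ M ⊓ M'.closedNormalClosure := fun x hx =>
      ⟨commutatorElement_mem_of_le_normalizer_right hM.closedNormalClosure_le_normalizer hx hN,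
        commutatorElement_mem_of_le_normalizer_left le_normalizer_of_normal (mem_top x) hN'⟩
    have hcomm : ∀ {k y : G}, k ∈ M ⊓ M'.closedNormalClosure → y ∈ M → Commute k y :=
      fun hk hy => hM.commute_of_mem_inf M'.isClosed_closedNormalClosure le_normalizer_of_normal
        hMN' hk (M.le_closedNormalClosure hy)
    exact hM.commute_of_forall_commutatorElement_commute (fun x hx y hy => hcomm (hxu x hx) hy)
      (fun x hx y hy => hcomm (hxu x hx) (hxu y hy).1) hn

theorem commute (hM : IsComponent M) (hM' : IsComponent M') (hne : M ≠ M') {m m' : G}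
    (hm : m ∈ M) (hm' : m' ∈ M') : Commute m m' := by
  have h₁ : ∀ x ∈ M, ∀ y ∈ M, Commute ⁅x, m'⁆ y := fun x hx y hy =>
    commute_commutatorElement hM hM' hne hx hm' hy
  have h₂ : ∀ x ∈ M, Commute ⁅x, m'⁆ m' := fun x hx => by
    rw [← commutatorElement_inv]
    exact (commute_commutatorElement hM' hM (Ne.symm hne) hm' hx hm').inv_left
  refine (hM.commute_of_forall_commutatorElement_commute h₁ (fun x hx y hy => ?_) hm).symm
  rw [commutatorElement_def y m']
  exact (((h₁ x hx y hy).mul_right (h₂ x hx)).mul_right (h₁ x hx y hy).inv_right).mul_right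
    (h₂ x hx).inv_right

end IsComponent

/-- If `G` is a Polish group, then the set of components of `G` is
countable. -/
theorem stmt_16 {G : Type*} [Group G] [TopologicalSpace G] [IsTopologicalGroup G]
    [PolishSpace G] :
    {M : Subgroup G | IsComponent M}.Countable := by
  have hwit (M : {M : Subgroup G | IsComponent M}) :
      ∃ a ∈ M.1, ∃ b ∈ M.1, ∃ c : G, ¬Commute ⁅a, b⁆ c := by
    obtain ⟨a, ha, b, hb, c, -, hnc⟩ := M.2.exists_not_commute
    exact ⟨a, ha, b, hb, c, hnc⟩
  choose a ha b hb c hnc using hwit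
  refine Set.countable_coe_iff.mp <| countable_of_isOpen_mem_iff a
    (fun M => {x | ¬Commute ⁅x, b M⁆ (c M)})
    (fun M => isOpen_ne_fun (by simp only [commutatorElement_def]; fun_prop)
      (by simp only [commutatorElement_def]; fun_prop))
    fun M M' => ⟨fun h => ?_, fun h => h ▸ hnc M⟩
  by_contra hne
  have hab : ⁅a M', b M⁆ = 1 := commutatorElement_eq_one_iff_commute.mpr
    (M'.2.commute M.2 (fun h => hne (Subtype.ext h)) (ha M') (hb M))
  exact h (hab ▸ Commute.one_left _)
end

section
/- Let G be a topological group and let K₁/L₁ and K₂/L₂ be normal factors of G (closed normal subgroups with L₁ < K₁ and L₂ < K₂). If K₁/L₁ and K₂/L₂ are associated, then their centralizers in G coincide: C_G(K₁/L₁) = C_G(K₂/L₂). -/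
/-- Normal factors `K₁/L₁` and `K₂/L₂` of a topological group `G` are associated if
`cl(K₁L₂) = cl(K₂L₁)`, `K₁ ∩ cl(L₁L₂) = L₁` and `K₂ ∩ cl(L₁L₂) = L₂`, where `cl` denotes
the topological closure of the subgroup generated. -/
def AssociatedFactors {G : Type*} [Group G] [TopologicalSpace G] [IsTopologicalGroup G]
    (K₁ L₁ K₂ L₂ : Subgroup G) : Prop :=
  (K₁ ⊔ L₂).topologicalClosure = (K₂ ⊔ L₁).topologicalClosure ∧
    K₁ ⊓ (L₁ ⊔ L₂).topologicalClosure = L₁ ∧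
    K₂ ⊓ (L₁ ⊔ L₂).topologicalClosure = L₂

/-- The centralizer of a normal factor `K/L` of `G`:
`C_G(K/L) = {g ∈ G : g·k·g⁻¹·k⁻¹ ∈ L for all k ∈ K}`. -/
def FactorCentralizer {G : Type*} [Group G] (K L : Subgroup G) : Set G :=
  {g : G | ∀ k ∈ K, g * k * g⁻¹ * k⁻¹ ∈ L}

/-!
If `g` centralizes `K₁/L₁`, the elements `x` with `⁅g, x⁆ ∈ cl(L₁L₂)` form a closed subgroup
containing `K₁` and `L₂`, hence containing `cl(K₁L₂) = cl(K₂L₁) ⊇ K₂`. Since `K₂` is normal,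
`⁅g, K₂⁆ ⊆ K₂ ∩ cl(L₁L₂) = L₂`. The other inclusion is symmetric.
-/

open scoped commutatorElement

namespace Subgroup

variable {G : Type*} [Group G]

/-- The preimage of the centralizer of `gN` in `G/N`. -/
def centralizerMod (N : Subgroup G) [N.Normal] (g : G) : Subgroup G where
  carrier := {x | ⁅g, x⁆ ∈ N}
  one_mem' := by simp
  mul_mem' {x y} hx hy := by
    have h : ⁅g, x * y⁆ = ⁅g, x⁆ * (x * ⁅g, y⁆ * x⁻¹) := by simp only [commutatorElement_def]; group
    show _ ∈ N
    rw [h]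
    exact mul_mem hx (Normal.conj_mem ‹_› _ hy x)
  inv_mem' {x} hx := by
    have h : ⁅g, x⁻¹⁆ = x⁻¹ * ⁅g, x⁆⁻¹ * x⁻¹⁻¹ := by simp only [commutatorElement_def]; group
    show _ ∈ N
    rw [h]
    exact Normal.conj_mem ‹_› _ (inv_mem hx) x⁻¹

variable {N N' : Subgroup G} [N.Normal] [N'.Normal]

theorem mem_centralizerMod {g x : G} : x ∈ centralizerMod N g ↔ ⁅g, x⁆ ∈ N := Iff.rfl

theorem le_centralizerMod (g : G) : N ≤ centralizerMod N g := fun x hx =>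
  mul_mem (Normal.conj_mem ‹_› x hx g) (inv_mem hx)

theorem centralizerMod_mono (h : N ≤ N') (g : G) : centralizerMod N g ≤ centralizerMod N' g :=
  fun _ hx => h hx

theorem isClosed_centralizerMod [TopologicalSpace G] [IsTopologicalGroup G]
    (hN : IsClosed (N : Set G)) (g : G) : IsClosed (centralizerMod N g : Set G) :=
  hN.preimage (f := fun x => g * x * g⁻¹ * x⁻¹) (by fun_prop)

end Subgroup

open Subgroup

theorem mem_factorCentralizer_iff {G : Type*} [Group G] {K L : Subgroup G} [L.Normal] {g : G} :
    g ∈ FactorCentralizer K L ↔ K ≤ centralizerMod L g := Iff.rfl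

theorem factorCentralizer_subset {G : Type*} [Group G] [TopologicalSpace G]
    [IsTopologicalGroup G] {K₁ L₁ K₂ L₂ : Subgroup G} [L₁.Normal] [K₂.Normal] [L₂.Normal]
    (hcl : (K₁ ⊔ L₂).topologicalClosure = (K₂ ⊔ L₁).topologicalClosure)
    (hK₂ : K₂ ⊓ (L₁ ⊔ L₂).topologicalClosure = L₂) :
    FactorCentralizer K₁ L₁ ⊆ FactorCentralizer K₂ L₂ := by
  intro g hg
  rw [mem_factorCentralizer_iff] at hg ⊢
  set M := (L₁ ⊔ L₂).topologicalClosure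
  have : M.Normal := is_normal_topologicalClosure _
  have hL₁M : L₁ ≤ M := le_sup_left.trans (le_topologicalClosure _)
  have hL₂M : L₂ ≤ M := le_sup_right.trans (le_topologicalClosure _)
  have hS : (K₁ ⊔ L₂).topologicalClosure ≤ centralizerMod M g :=
    topologicalClosure_minimal _
      (sup_le (hg.trans (centralizerMod_mono hL₁M g))
        ((le_centralizerMod g).trans (centralizerMod_mono hL₂M g)))
      (isClosed_centralizerMod (isClosed_topologicalClosure _) g)
  intro k hk
  have hkM : ⁅g, k⁆ ∈ M := hS (hcl ▸ le_topologicalClosure _ (mem_sup_left hk))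
  rw [mem_centralizerMod, ← hK₂]
  exact ⟨le_centralizerMod g hk, hkM⟩

theorem stmt_17_general {G : Type*} [Group G] [TopologicalSpace G] [IsTopologicalGroup G]
    (K₁ L₁ K₂ L₂ : Subgroup G)
    (hK₁n : K₁.Normal) (hL₁n : L₁.Normal) (hK₂n : K₂.Normal) (hL₂n : L₂.Normal)
    (hassoc : AssociatedFactors K₁ L₁ K₂ L₂) :
    FactorCentralizer K₁ L₁ = FactorCentralizer K₂ L₂ := by
  obtain ⟨hcl, hK₁, hK₂⟩ := hassoc
  rw [sup_comm L₁ L₂] at hK₁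
  exact (factorCentralizer_subset hcl hK₂).antisymm (factorCentralizer_subset hcl.symm hK₁)

/-- Let `G` be a topological group and let `K₁/L₁` and `K₂/L₂` be normal
factors of `G`. If `K₁/L₁` and `K₂/L₂` are associated, then their centralizers in `G`
coincide. -/
theorem stmt_17 {G : Type*} [Group G] [TopologicalSpace G] [IsTopologicalGroup G]
    (K₁ L₁ K₂ L₂ : Subgroup G)
    (hK₁c : IsClosed (K₁ : Set G)) (hL₁c : IsClosed (L₁ : Set G))
    (hK₂c : IsClosed (K₂ : Set G)) (hL₂c : IsClosed (L₂ : Set G))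
    (hK₁n : K₁.Normal) (hL₁n : L₁.Normal) (hK₂n : K₂.Normal) (hL₂n : L₂.Normal)
    (h₁ : L₁ < K₁) (h₂ : L₂ < K₂)
    (hassoc : AssociatedFactors K₁ L₁ K₂ L₂) :
    FactorCentralizer K₁ L₁ = FactorCentralizer K₂ L₂ :=
  stmt_17_general K₁ L₁ K₂ L₂ hK₁n hL₁n hK₂n hL₂n hassoc
end

section
/- Let G be a topological group and let K₁/L₁ and K₂/L₂ be non-abelian chief factors of G. Then the following are equivalent: (1) K₁/L₁ is associated to K₂/L₂; (2) C_G(K₁/L₁) = C_G(K₂/L₂); (3) cl(K₁L₂) = cl(K₂L₁) and cl(L₁L₂) is strictly contained in cl(K₁K₂), where cl denotes the topological closure of the subgroup generated. -/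
/-- `K/L` is a chief factor of `G`: `K`, `L` are closed normal subgroups, `L < K`, and no
closed normal subgroup of `G` lies strictly between `L` and `K`. -/
def IsChiefFactor {G : Type*} [Group G] [TopologicalSpace G]
    (K L : Subgroup G) : Prop :=
  IsClosed (K : Set G) ∧ IsClosed (L : Set G) ∧ K.Normal ∧ L.Normal ∧ L < K ∧
    ∀ M : Subgroup G, M.Normal → IsClosed (M : Set G) → L < M → M < K → False

open QuotientGroup

section FactorCentralizers

variable {G : Type*} [Group G]

def factorCentralizer (S : Set G) (L : Subgroup G) [L.Normal] : Subgroup G :=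
  (Subgroup.centralizer ((↑) '' S : Set (G ⧸ L))).comap (mk' L)

variable {S T : Set G} {L : Subgroup G} [L.Normal] {g : G}

lemma mem_factorCentralizer : g ∈ factorCentralizer S L ↔ ∀ k ∈ S, g * k * g⁻¹ * k⁻¹ ∈ L := by
  simp only [factorCentralizer, Subgroup.mem_comap, Subgroup.mem_centralizer_iff,
    Set.forall_mem_image, mk'_apply, ← eq_one_iff, mk_mul, mk_inv]
  exact forall₂_congr fun k _ => by
    rw [← commutatorElement_def, commutatorElement_eq_one_iff_mul_comm, eq_comm]

lemma coe_factorCentralizer (K : Subgroup G) :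
    (factorCentralizer K L : Set G) = FactorCentralizer K L :=
  Set.ext fun _ => mem_factorCentralizer

lemma factorCentralizer_anti (h : S ⊆ T) : factorCentralizer T L ≤ factorCentralizer S L :=
  Subgroup.comap_mono (Subgroup.centralizer_le (Set.image_mono h))

lemma le_factorCentralizer (S : Set G) : L ≤ factorCentralizer S L := fun l hl _ _ => by
  rw [mk'_apply, (eq_one_iff l).2 hl, one_mul, mul_one]

lemma subset_factorCentralizer_singleton_iff :
    S ⊆ factorCentralizer {g} L ↔ g ∈ factorCentralizer S L := by
  simp only [Set.subset_def, SetLike.mem_coe, factorCentralizer, Subgroup.mem_comap,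
    Subgroup.mem_centralizer_iff, Set.forall_mem_image, Set.image_singleton,
    Set.mem_singleton_iff, forall_eq]
  exact forall₂_congr fun _ _ => eq_comm

lemma isClosed_factorCentralizer [TopologicalSpace G] [IsTopologicalGroup G]
    (hL : IsClosed (L : Set G)) : IsClosed (factorCentralizer S L : Set G) :=
  (Set.isClosed_centralizer _).preimage continuous_mk

lemma factorCentralizer_of_inf_eq {K M : Subgroup G} [K.Normal] [M.Normal] (h : K ⊓ M = L) :
    factorCentralizer K L = factorCentralizer K M := by
  ext g
  simp only [mem_factorCentralizer]
  refine forall₂_congr fun k hk => ⟨fun hL => (h ▸ inf_le_right : L ≤ M) hL, fun hM => ?_⟩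
  have hK : g * k * g⁻¹ * k⁻¹ ∈ K := K.mul_mem (‹K.Normal›.conj_mem k hk g) (K.inv_mem hk)
  exact h ▸ ⟨hK, hM⟩

lemma le_factorCentralizer_of_inf_le {K₁ K₂ : Subgroup G} [K₁.Normal] [K₂.Normal]
    (h : K₁ ⊓ K₂ ≤ L) : K₁ ≤ factorCentralizer K₂ L := fun _ hg =>
  mem_factorCentralizer.2 fun _ hk =>
    h (Subgroup.commutator_le_inf K₁ K₂ (Subgroup.commutator_mem_commutator hg hk))

lemma not_le_factorCentralizer {K : Subgroup G}
    (hna : ∃ a ∈ K, ∃ b ∈ K, a * b * a⁻¹ * b⁻¹ ∉ L) : ¬ K ≤ factorCentralizer K L := by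
  obtain ⟨a, ha, b, hb, hab⟩ := hna
  exact fun hle => hab (mem_factorCentralizer.1 (hle ha) b hb)

variable [TopologicalSpace G] [IsTopologicalGroup G]

lemma Subgroup.topologicalClosure_le_iff {H N : Subgroup G} (hN : IsClosed (N : Set G)) :
    H.topologicalClosure ≤ N ↔ H ≤ N :=
  ⟨(H.le_topologicalClosure).trans, fun h => H.topologicalClosure_minimal h hN⟩

lemma factorCentralizer_topologicalClosure_sup {K L' M : Subgroup G} [M.Normal]
    (hM : IsClosed (M : Set G)) (hL' : L' ≤ M) :
    factorCentralizer ((K ⊔ L').topologicalClosure : Set G) M = factorCentralizer K M := by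
  have hK : K ≤ (K ⊔ L').topologicalClosure :=
    le_sup_left.trans (K ⊔ L').le_topologicalClosure
  refine le_antisymm (factorCentralizer_anti hK) fun g hg => ?_
  rw [← subset_factorCentralizer_singleton_iff, SetLike.coe_subset_coe,
    Subgroup.topologicalClosure_le_iff (isClosed_factorCentralizer hM)]
  exact sup_le (subset_factorCentralizer_singleton_iff.2 hg)
    (hL'.trans (le_factorCentralizer _))

end FactorCentralizers

namespace IsChiefFactor

variable {G : Type*} [Group G] [TopologicalSpace G] {K L N : Subgroup G}

lemma normal_left (h : IsChiefFactor K L) : K.Normal := h.2.2.1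

lemma normal_right (h : IsChiefFactor K L) : L.Normal := h.2.2.2.1

lemma isClosed_right (h : IsChiefFactor K L) : IsClosed (L : Set G) := h.2.1

lemma lt (h : IsChiefFactor K L) : L < K := h.2.2.2.2.1

lemma inf_eq_iff_not_le (h : IsChiefFactor K L) (hN : N.Normal) (hNc : IsClosed (N : Set G))
    (hLN : L ≤ N) : K ⊓ N = L ↔ ¬ K ≤ N := by
  obtain ⟨hKc, -, hK, -, hLK, hmin⟩ := h
  refine ⟨fun hKN hle => hLK.ne (hKN ▸ inf_eq_left.2 hle), fun hKN => ?_⟩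
  by_contra hne
  exact hmin (K ⊓ N) (Subgroup.normal_inf_normal K N) (hKc.inter hNc)
    ((le_inf hLK.le hLN).lt_of_ne (Ne.symm hne))
    (inf_le_left.lt_of_ne fun hKN' => hKN (inf_eq_left.1 hKN'))

end IsChiefFactor

section ChiefFactors

variable {G : Type*} [Group G] [TopologicalSpace G] [IsTopologicalGroup G]
  {K₁ L₁ K₂ L₂ : Subgroup G}

lemma AssociatedFactors.factorCentralizer_eq [K₁.Normal] [L₁.Normal] [K₂.Normal] [L₂.Normal]
    (h : AssociatedFactors K₁ L₁ K₂ L₂) : factorCentralizer K₁ L₁ = factorCentralizer K₂ L₂ := by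
  obtain ⟨hcl, h₁, h₂⟩ := h
  set M := (L₁ ⊔ L₂).topologicalClosure
  have := Subgroup.is_normal_topologicalClosure (L₁ ⊔ L₂)
  have hMc : IsClosed (M : Set G) := Subgroup.isClosed_topologicalClosure _
  calc factorCentralizer K₁ L₁
      = factorCentralizer K₁ M := factorCentralizer_of_inf_eq h₁
    _ = factorCentralizer ((K₁ ⊔ L₂).topologicalClosure : Set G) M :=
      (factorCentralizer_topologicalClosure_sup hMc
        (le_sup_right.trans (Subgroup.le_topologicalClosure _))).symm
    _ = factorCentralizer ((K₂ ⊔ L₁).topologicalClosure : Set G) M := by rw [hcl]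
    _ = factorCentralizer K₂ M :=
      factorCentralizer_topologicalClosure_sup hMc
        (le_sup_left.trans (Subgroup.le_topologicalClosure _))
    _ = factorCentralizer K₂ L₂ := (factorCentralizer_of_inf_eq h₂).symm

lemma topologicalClosure_sup_le_of_factorCentralizer_eq [L₁.Normal] [L₂.Normal]
    (h₁ : IsChiefFactor K₁ L₁) (hna₁ : ¬ K₁ ≤ factorCentralizer K₁ L₁)
    (h₂ : IsChiefFactor K₂ L₂) (hC : factorCentralizer K₁ L₁ = factorCentralizer K₂ L₂) :
    (K₂ ⊔ L₁).topologicalClosure ≤ (K₁ ⊔ L₂).topologicalClosure := by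
  have := h₁.normal_left
  have := h₂.normal_left
  set N := (K₁ ⊔ L₂).topologicalClosure
  have hN : N.Normal := Subgroup.is_normal_topologicalClosure _
  have hNc : IsClosed (N : Set G) := Subgroup.isClosed_topologicalClosure _
  have hK₁N : K₁ ≤ N := le_sup_left.trans (Subgroup.le_topologicalClosure _)
  have hK₂N : K₂ ≤ N := by
    by_contra hK₂N
    have hinf : K₂ ⊓ N = L₂ := (h₂.inf_eq_iff_not_le hN hNc
      (le_sup_right.trans (Subgroup.le_topologicalClosure _))).2 hK₂N
    refine hna₁ (hC ▸ le_factorCentralizer_of_inf_le ?_)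
    calc K₁ ⊓ K₂ ≤ K₂ ⊓ N := inf_comm K₁ K₂ ▸ inf_le_inf_left K₂ hK₁N
      _ = L₂ := hinf
  exact (Subgroup.topologicalClosure_le_iff hNc).2 (sup_le hK₂N (h₁.lt.le.trans hK₁N))

lemma associatedFactors_of_factorCentralizer_eq [L₁.Normal] [L₂.Normal]
    (h₁ : IsChiefFactor K₁ L₁) (hna₁ : ¬ K₁ ≤ factorCentralizer K₁ L₁)
    (h₂ : IsChiefFactor K₂ L₂) (hna₂ : ¬ K₂ ≤ factorCentralizer K₂ L₂)
    (hC : factorCentralizer K₁ L₁ = factorCentralizer K₂ L₂) : AssociatedFactors K₁ L₁ K₂ L₂ := by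
  have hM := Subgroup.is_normal_topologicalClosure (L₁ ⊔ L₂)
  have hMc := Subgroup.isClosed_topologicalClosure (L₁ ⊔ L₂)
  have hMC : (L₁ ⊔ L₂).topologicalClosure ≤ factorCentralizer K₁ L₁ :=
    (Subgroup.topologicalClosure_le_iff (isClosed_factorCentralizer h₁.isClosed_right)).2
      (sup_le (le_factorCentralizer _) (hC ▸ le_factorCentralizer _))
  refine ⟨le_antisymm (topologicalClosure_sup_le_of_factorCentralizer_eq h₂ hna₂ h₁ hC.symm)
    (topologicalClosure_sup_le_of_factorCentralizer_eq h₁ hna₁ h₂ hC), ?_, ?_⟩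
  · exact (h₁.inf_eq_iff_not_le hM hMc (le_sup_left.trans (Subgroup.le_topologicalClosure _))).2
      fun hle => hna₁ (hle.trans hMC)
  · exact (h₂.inf_eq_iff_not_le hM hMc (le_sup_right.trans (Subgroup.le_topologicalClosure _))).2
      fun hle => hna₂ (hle.trans (hC ▸ hMC))

lemma associatedFactors_iff_factorCentralizer_eq (h₁ : IsChiefFactor K₁ L₁)
    (h₂ : IsChiefFactor K₂ L₂) (hna₁ : ∃ a ∈ K₁, ∃ b ∈ K₁, a * b * a⁻¹ * b⁻¹ ∉ L₁)
    (hna₂ : ∃ a ∈ K₂, ∃ b ∈ K₂, a * b * a⁻¹ * b⁻¹ ∉ L₂) :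
    AssociatedFactors K₁ L₁ K₂ L₂ ↔ FactorCentralizer K₁ L₁ = FactorCentralizer K₂ L₂ := by
  have := h₁.normal_left
  have := h₁.normal_right
  have := h₂.normal_left
  have := h₂.normal_right
  rw [← coe_factorCentralizer, ← coe_factorCentralizer, SetLike.coe_set_eq]
  exact ⟨AssociatedFactors.factorCentralizer_eq, associatedFactors_of_factorCentralizer_eq
    h₁ (not_le_factorCentralizer hna₁) h₂ (not_le_factorCentralizer hna₂)⟩

lemma associatedFactors_iff_not_le (h₁ : IsChiefFactor K₁ L₁) (h₂ : IsChiefFactor K₂ L₂) :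
    AssociatedFactors K₁ L₁ K₂ L₂ ↔
      (K₁ ⊔ L₂).topologicalClosure = (K₂ ⊔ L₁).topologicalClosure ∧
        ¬ K₁ ≤ (L₁ ⊔ L₂).topologicalClosure ∧ ¬ K₂ ≤ (L₁ ⊔ L₂).topologicalClosure := by
  have := h₁.normal_right
  have := h₂.normal_right
  have hM := Subgroup.is_normal_topologicalClosure (L₁ ⊔ L₂)
  have hMc := Subgroup.isClosed_topologicalClosure (L₁ ⊔ L₂)
  rw [AssociatedFactors,
    h₁.inf_eq_iff_not_le hM hMc (le_sup_left.trans (Subgroup.le_topologicalClosure _)),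
    h₂.inf_eq_iff_not_le hM hMc (le_sup_right.trans (Subgroup.le_topologicalClosure _))]

lemma not_le_and_not_le_iff_lt (hLK₁ : L₁ ≤ K₁) (hLK₂ : L₂ ≤ K₂)
    (hcl : (K₁ ⊔ L₂).topologicalClosure = (K₂ ⊔ L₁).topologicalClosure) :
    (¬ K₁ ≤ (L₁ ⊔ L₂).topologicalClosure ∧ ¬ K₂ ≤ (L₁ ⊔ L₂).topologicalClosure) ↔
      (L₁ ⊔ L₂).topologicalClosure < (K₁ ⊔ K₂).topologicalClosure := by
  set M := (L₁ ⊔ L₂).topologicalClosure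
  have hMc : IsClosed (M : Set G) := Subgroup.isClosed_topologicalClosure _
  have hL₁M : L₁ ≤ M := le_sup_left.trans (Subgroup.le_topologicalClosure _)
  have hL₂M : L₂ ≤ M := le_sup_right.trans (Subgroup.le_topologicalClosure _)
  have hK₁K₂ : K₁ ≤ M ↔ K₂ ≤ M :=
    calc K₁ ≤ M ↔ (K₁ ⊔ L₂).topologicalClosure ≤ M := by
          rw [Subgroup.topologicalClosure_le_iff hMc, sup_le_iff, and_iff_left hL₂M]
      _ ↔ (K₂ ⊔ L₁).topologicalClosure ≤ M := by rw [hcl]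
      _ ↔ K₂ ≤ M := by
          rw [Subgroup.topologicalClosure_le_iff hMc, sup_le_iff, and_iff_left hL₁M]
  rw [lt_iff_le_not_ge, Subgroup.topologicalClosure_le_iff hMc, sup_le_iff, hK₁K₂,
    and_iff_right (Subgroup.topologicalClosure_mono (sup_le_sup hLK₁ hLK₂))]
  tauto

end ChiefFactors

/-- Let `G` be a topological group and let `K₁/L₁` and `K₂/L₂` be non-abelian
chief factors of `G`. Then the following are equivalent:
(1) `K₁/L₁` is associated to `K₂/L₂`;
(2) `C_G(K₁/L₁) = C_G(K₂/L₂)`;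
(3) `cl(K₁L₂) = cl(K₂L₁)` and `cl(L₁L₂)` is strictly contained in `cl(K₁K₂)`. -/
theorem stmt_18 {G : Type*} [Group G] [TopologicalSpace G] [IsTopologicalGroup G]
    (K₁ L₁ K₂ L₂ : Subgroup G)
    (hchief₁ : IsChiefFactor K₁ L₁) (hchief₂ : IsChiefFactor K₂ L₂)
    (hna₁ : ∃ a ∈ K₁, ∃ b ∈ K₁, a * b * a⁻¹ * b⁻¹ ∉ L₁)
    (hna₂ : ∃ a ∈ K₂, ∃ b ∈ K₂, a * b * a⁻¹ * b⁻¹ ∉ L₂) :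
    (AssociatedFactors K₁ L₁ K₂ L₂ ↔ FactorCentralizer K₁ L₁ = FactorCentralizer K₂ L₂) ∧
      (AssociatedFactors K₁ L₁ K₂ L₂ ↔
        ((K₁ ⊔ L₂).topologicalClosure = (K₂ ⊔ L₁).topologicalClosure ∧
          (L₁ ⊔ L₂).topologicalClosure < (K₁ ⊔ K₂).topologicalClosure)) := by
  refine ⟨associatedFactors_iff_factorCentralizer_eq hchief₁ hchief₂ hna₁ hna₂, ?_⟩
  rw [associatedFactors_iff_not_le hchief₁ hchief₂]
  exact and_congr_right fun hcl => not_le_and_not_le_iff_lt hchief₁.lt.le hchief₂.lt.le hcl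
end
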